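/- The signed area of a spherical triangle on the unit sphere with vertices v0, v1, v2 (unit vectors in R^3) equals 2·atan2(v0·(v1×v2), 1 + v0·v1 + v0·v2 + v1·v2), and this quantity equals the spherical excess α+β+γ−π for a positively oriented non-degenerate spherical triangle with interior angles α, β, γ. -/

import Mathlib

open MeasureTheory Real Set
open scoped Classical

noncomputable section

/-- ℝ³ as a Euclidean space. -/
abbrev E3 := EuclideanSpace ℝ (Fin 3)

/-- Dot product in ℝ³. -/
def dot3 (u v : E3) : ℝ := inner ℝ u v

/-- Cross product in ℝ³. -/
def cross3 (u v : E3) : E3 :=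
  (EuclideanSpace.equiv (Fin 3) ℝ).symm
    ![u 1 * v 2 - u 2 * v 1, u 2 * v 0 - u 0 * v 2, u 0 * v 1 - u 1 * v 0]

/-- Two-argument arctangent, `atan2 y x = arg (x + i y) ∈ (-π, π]`. -/
def atan2 (y x : ℝ) : ℝ := Complex.arg ⟨x, y⟩

/-- Signed area of the spherical triangle with vertices `u v w` (Van Oosterom–Strackee). -/
def signedArea (u v w : E3) : ℝ :=
  2 * atan2 (dot3 u (cross3 v w)) (1 + dot3 u v + dot3 u w + dot3 v w)

/-- The unit sphere S² ⊂ ℝ³. -/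
def unitSphere : Set E3 := Metric.sphere 0 1

/-- Orthogonal projection of `v` onto the tangent plane of the unit sphere at `u`. -/
def tproj (u v : E3) : E3 := v - (dot3 u v) • u

/-- Normalization of a vector. -/
def nz (v : E3) : E3 := ‖v‖⁻¹ • v

/-- Interior angle at `u` of the spherical triangle `u v w`. -/
def sphAngle (u v w : E3) : ℝ :=
  Real.arccos (dot3 (tproj u v) (tproj u w) / (‖tproj u v‖ * ‖tproj u w‖))

/-- The (closed) minor geodesic arc from `a` to `b` on the unit sphere. -/
def geoArc (a b : E3) : Set E3 :=
  {v | ∃ s t : ℝ, 0 ≤ s ∧ 0 ≤ t ∧ s • a + t • b ≠ 0 ∧ v = nz (s • a + t • b)}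

/-- The (closed) spherical triangle with vertices `a b c`. -/
def sphTriangle (a b c : E3) : Set E3 :=
  {v | ∃ r s t : ℝ, 0 ≤ r ∧ 0 ≤ s ∧ 0 ≤ t ∧ r • a + s • b + t • c ≠ 0 ∧
      v = nz (r • a + s • b + t • c)}

/-- The open spherical triangle region determined by the orientation of `a b c`. -/
def insideTri (a b c : E3) : Set E3 :=
  {v : E3 | ‖v‖ = 1 ∧
    ((0 < dot3 v (cross3 a b) ∧ 0 < dot3 v (cross3 b c) ∧ 0 < dot3 v (cross3 c a)) ∨
     (dot3 v (cross3 a b) < 0 ∧ dot3 v (cross3 b c) < 0 ∧ dot3 v (cross3 c a) < 0))}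

/-- Area of a subset of ℝ³, via the 2-dimensional Hausdorff measure. -/
def area (Ω : Set E3) : ℝ := (μH[2] Ω).toReal

/-- Radial projection onto the unit sphere centered at `p`. -/
def projSph (p x : E3) : E3 := nz (x - p)

/-- Boundary of a region inside the unit sphere (frontier relative to the sphere). -/
def sphFrontier (Ω : Set E3) : Set E3 := closure Ω ∩ closure (unitSphere \ Ω)

/-- Geodesic curvature of a unit-speed curve on the unit sphere. -/
def geodCurv (γ : ℝ → E3) (t : ℝ) : ℝ :=
  dot3 (γ t) (cross3 (deriv γ t) (deriv (deriv γ) t))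

/-- Unit-speed–independent angle function of a curve's tangent relative to a tangent
vector field `X` on the sphere:  `θ t` is a continuous determination of the angle from
`X (c t)` to `deriv c t` in the oriented tangent plane at `c t`. -/
def IsAngleFor (X : E3 → E3) (c : ℝ → E3) (θ : ℝ → ℝ) : Prop :=
  Continuous θ ∧ ∀ t,
    ‖X (c t)‖ * ‖deriv c t‖ * Real.cos (θ t) = dot3 (X (c t)) (deriv c t) ∧
    ‖X (c t)‖ * ‖deriv c t‖ * Real.sin (θ t) = dot3 (c t) (cross3 (X (c t)) (deriv c t))

/-- The geodesic circle of radius `r` around `z` on the unit sphere, with respect to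
an (oriented) orthonormal tangent frame `e1, e2` at `z`. -/
def circleCurve (z e1 e2 : E3) (r t : ℝ) : E3 :=
  Real.cos r • z + Real.sin r • (Real.cos (2 * π * t) • e1 + Real.sin (2 * π * t) • e2)

/-- `X` has an isolated singularity of index 1 at `z`: the tangent of every small
positively-oriented geodesic circle around `z` makes zero net turns relative to `X`. -/
def IndexOne (X : E3 → E3) (z : E3) : Prop :=
  ∃ e1 e2 : E3, ‖e1‖ = 1 ∧ ‖e2‖ = 1 ∧ dot3 e1 e2 = 0 ∧ dot3 z e1 = 0 ∧ dot3 z e2 = 0 ∧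
    cross3 e1 e2 = z ∧
    ∃ r₀ > 0, ∀ r ∈ Ioo (0 : ℝ) r₀, ∀ θ : ℝ → ℝ,
      IsAngleFor X (circleCurve z e1 e2 r) θ → θ 1 - θ 0 = 0

/-- The Alexander numbering rule for an integer-valued function `f` relative to the
oriented curve `γ` on the unit sphere: at every smooth point of `γ`, the value
immediately to the left exceeds the value immediately to the right by one. -/
def AlexanderRule (γ : ℝ → E3) (f : E3 → ℤ) : Prop :=
  ∀ t : ℝ, DifferentiableAt ℝ γ t → deriv γ t ≠ 0 →
    ∃ ε₀ > 0, ∀ ε ∈ Ioo 0 ε₀,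
      f (nz (γ t + ε • cross3 (γ t) (deriv γ t))) =
        f (nz (γ t - ε • cross3 (γ t) (deriv γ t))) + 1

/-- The multiset of directed edges of a triangle mesh. -/
def dirEdges (m : ℕ) (tri : Fin m → Fin 3 → E3) : Multiset (E3 × E3) :=
  (Finset.univ : Finset (Fin m)).val.bind fun i =>
    {(tri i 0, tri i 1), (tri i 1, tri i 2), (tri i 2, tri i 0)}

/-- The multiset of boundary edges of a triangle mesh (directed edges whose reversal
does not occur in the mesh). -/
def bdryEdges (m : ℕ) (tri : Fin m → Fin 3 → E3) : Multiset (E3 × E3) :=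
  (dirEdges m tri).filter fun e => (dirEdges m tri).count e.swap = 0

/-- `q` lies in the open triangle `A B C`. -/
def openTriPt (A B C q : E3) : Prop :=
  ∃ a b c : ℝ, 0 < a ∧ 0 < b ∧ 0 < c ∧ a + b + c = 1 ∧ q = a • A + b • B + c • C

/-- `q` lies in the closed triangle `A B C`. -/
def closedTriPt (A B C q : E3) : Prop :=
  ∃ a b c : ℝ, 0 ≤ a ∧ 0 ≤ b ∧ 0 ≤ c ∧ a + b + c = 1 ∧ q = a • A + b • B + c • C

/-- `q` lies on the closed segment `[A, B]`. -/
def onSeg (A B q : E3) : Prop :=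
  ∃ a b : ℝ, 0 ≤ a ∧ 0 ≤ b ∧ a + b = 1 ∧ q = a • A + b • B

/-- (Unnormalized) normal of the triangle `A B C`. -/
def triNormal (A B C : E3) : E3 := cross3 (B - A) (C - A)

/-- The open ray from `p` in direction `d` meets the open triangle `A B C`. -/
def rayHits (p d A B C : E3) : Prop := ∃ t : ℝ, 0 < t ∧ openTriPt A B C (p + t • d)

/-- Signed number of intersections of the ray from `p` in direction `d` with the mesh. -/
def chiMesh (m : ℕ) (tri : Fin m → Fin 3 → E3) (p d : E3) : ℤ :=
  ∑ i : Fin m,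
    if rayHits p d (tri i 0) (tri i 1) (tri i 2) then
      (if 0 < dot3 d (triNormal (tri i 0) (tri i 1) (tri i 2)) then 1 else -1)
    else 0

/-- The ray from `p` in direction `d` is generic for the mesh: it meets no edges and
meets triangle interiors transversally. -/
def GenericRay (m : ℕ) (tri : Fin m → Fin 3 → E3) (p d : E3) : Prop :=
  d ≠ 0 ∧
  (∀ i : Fin m, ∀ t : ℝ, 0 < t →
    ¬ onSeg (tri i 0) (tri i 1) (p + t • d) ∧
    ¬ onSeg (tri i 1) (tri i 2) (p + t • d) ∧
    ¬ onSeg (tri i 2) (tri i 0) (p + t • d)) ∧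
  (∀ i : Fin m, rayHits p d (tri i 0) (tri i 1) (tri i 2) →
    dot3 d (triNormal (tri i 0) (tri i 1) (tri i 2)) ≠ 0)

/-- Sum over mesh triangles of signed areas of their radial projections to `S²_p`. -/
def meshWNsum (m : ℕ) (tri : Fin m → Fin 3 → E3) (p : E3) : ℝ :=
  ∑ i : Fin m,
    signedArea (projSph p (tri i 0)) (projSph p (tri i 1)) (projSph p (tri i 2))

/-- The generalized winding number of a triangle mesh at `p`. -/
def meshWN (m : ℕ) (tri : Fin m → Fin 3 → E3) (p : E3) : ℝ :=
  (1 / (4 * π)) * meshWNsum m tri p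

/-- Spherical linear interpolation: unit-speed-reparametrized minor great-circle arc
from `a` to `b` over the parameter interval `[0,1]`. -/
def slerp (a b : E3) (s : ℝ) : E3 :=
  (Real.sin ((1 - s) * Real.arccos (dot3 a b)) / Real.sin (Real.arccos (dot3 a b))) • a +
  (Real.sin (s * Real.arccos (dot3 a b)) / Real.sin (Real.arccos (dot3 a b))) • b

/-- Stereographic projection from `x₀` onto the plane tangent to the sphere at `-x₀`. -/
def stereo (x₀ q : E3) : E3 := x₀ + (2 / (1 - dot3 x₀ q)) • (q - x₀)

/-- Stereographic projection in coordinates, using a tangent frame `e1, e2` at `-x₀`. -/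
def stereo2 (x₀ e1 e2 q : E3) : ℝ × ℝ :=
  (dot3 (stereo x₀ q - (-x₀)) e1, dot3 (stereo x₀ q - (-x₀)) e2)

/-- Dot product in ℝ². -/
def dot2 (a b : ℝ × ℝ) : ℝ := a.1 * b.1 + a.2 * b.2

/-- Determinant of two vectors in ℝ². -/
def det2 (a b : ℝ × ℝ) : ℝ := a.1 * b.2 - a.2 * b.1

/-- Normal vector of a parametrized surface `φ` at parameter `x`. -/
def surfNormal (φ : ℝ × ℝ → E3) (x : ℝ × ℝ) : E3 :=
  cross3 (fderiv ℝ φ x (1, 0)) (fderiv ℝ φ x (0, 1))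

end
lemma myst_dot3_eq (u v : E3) : dot3 u v = u 0 * v 0 + u 1 * v 1 + u 2 * v 2 := by
  simp [dot3, PiLp.inner_apply, RCLike.inner_apply, Fin.sum_univ_three]; ring

lemma myst_dot3_comm (u v : E3) : dot3 u v = dot3 v u := (real_inner_comm u v).symm

lemma myst_dot3_self (u : E3) (h : ‖u‖ = 1) : dot3 u u = 1 := by
  rw [dot3, real_inner_self_eq_norm_sq, h]; norm_num

lemma myst_gram (v0 v1 v2 : E3) (h0 : ‖v0‖ = 1) (h1 : ‖v1‖ = 1) (h2 : ‖v2‖ = 1) :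
    (dot3 v0 (cross3 v1 v2))^2 = 1 + 2*(dot3 v0 v1)*(dot3 v0 v2)*(dot3 v1 v2)
      - (dot3 v0 v1)^2 - (dot3 v0 v2)^2 - (dot3 v1 v2)^2 := by
  have n0 : v0 0 ^2 + v0 1^2 + v0 2^2 = 1 := by
    have h2' := myst_dot3_self v0 h0; rw [myst_dot3_eq] at h2'; nlinarith [h2']
  have n1 : v1 0 ^2 + v1 1^2 + v1 2^2 = 1 := by
    have h2' := myst_dot3_self v1 h1; rw [myst_dot3_eq] at h2'; nlinarith [h2']
  have n2 : v2 0 ^2 + v2 1^2 + v2 2^2 = 1 := by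
    have h2' := myst_dot3_self v2 h2; rw [myst_dot3_eq] at h2'; nlinarith [h2']
  have c0 : cross3 v1 v2 0 = v1 1 * v2 2 - v1 2 * v2 1 := by simp [cross3]
  have c1 : cross3 v1 v2 1 = v1 2 * v2 0 - v1 0 * v2 2 := by simp [cross3]
  have c2 : cross3 v1 v2 2 = v1 0 * v2 1 - v1 1 * v2 0 := by simp [cross3]
  simp only [myst_dot3_eq, c0, c1, c2]
  linear_combination
    ((v1 0^2+v1 1^2+v1 2^2)*(v2 0^2+v2 1^2+v2 2^2) - (v1 0*v2 0+v1 1*v2 1+v1 2*v2 2)^2) * n0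
    + ((v2 0^2+v2 1^2+v2 2^2) - (v0 0*v2 0+v0 1*v2 1+v0 2*v2 2)^2) * n1
    + (1 - (v0 0*v1 0+v0 1*v1 1+v0 2*v1 2)^2) * n2

lemma myst_tproj_dot (u v w : E3) (hu : ‖u‖ = 1) :
    dot3 (tproj u v) (tproj u w) = dot3 v w - dot3 u v * dot3 u w := by
  have hu1 := myst_dot3_self u hu
  have hc : inner ℝ v u = inner ℝ u v := real_inner_comm u v
  simp only [tproj, dot3] at *
  simp only [inner_sub_left, inner_sub_right, real_inner_smul_left, real_inner_smul_right]
  linear_combination (inner ℝ u v * inner ℝ u w : ℝ) * hu1 - (inner ℝ u w : ℝ) * hc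

lemma myst_tproj_norm (u v : E3) (hu : ‖u‖ = 1) :
    ‖tproj u v‖ = Real.sqrt (dot3 v v - (dot3 u v)^2) := by
  have h : ‖tproj u v‖^2 = dot3 v v - (dot3 u v)^2 := by
    rw [← real_inner_self_eq_norm_sq]
    have := myst_tproj_dot u v v hu
    rw [dot3] at this; rw [this]; ring
  rw [← h, Real.sqrt_sq (norm_nonneg _)]

lemma myst_sphAngle_eq (u v w : E3) (hu : ‖u‖ = 1) (hv : ‖v‖ = 1) (hw : ‖w‖ = 1) :
    sphAngle u v w = Real.arccos ((dot3 v w - dot3 u v * dot3 u w) /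
      (Real.sqrt (1 - (dot3 u v)^2) * Real.sqrt (1 - (dot3 u w)^2))) := by
  rw [sphAngle, myst_tproj_dot u v w hu, myst_tproj_norm u v hu, myst_tproj_norm u w hu,
    myst_dot3_self v hv, myst_dot3_self w hw]

lemma myst_angle_facts (num X d : ℝ) (hX : 0 < X) (hd : 0 < d)
    (hrel : num^2 + d^2 = X^2) :
    Real.cos (Real.arccos (num / X)) = num / X ∧
    Real.sin (Real.arccos (num / X)) = d / X ∧
    0 < Real.arccos (num / X) ∧ Real.arccos (num / X) < π := by
  have h1 : num^2 < X^2 := by nlinarith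
  have habs : |num| < X := by
    rw [← Real.sqrt_sq_eq_abs, ← Real.sqrt_sq hX.le]
    exact Real.sqrt_lt_sqrt (sq_nonneg _) h1
  obtain ⟨hl, hr⟩ := abs_lt.mp habs
  have ht1 : num / X < 1 := (div_lt_one hX).2 hr
  have ht2 : -1 < num / X := by rw [lt_div_iff₀ hX]; linarith
  refine ⟨Real.cos_arccos ht2.le ht1.le, ?_, Real.arccos_pos.2 ht1, ?_⟩
  · rw [Real.sin_arccos]
    have : 1 - (num / X)^2 = (d / X)^2 := by field_simp; linarith [hrel]
    rw [this, Real.sqrt_sq (by positivity)]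
  · exact lt_of_le_of_ne (Real.arccos_le_pi _) fun h =>
      absurd (Real.arccos_eq_pi.mp h) (by linarith)

lemma myst_sum_lt_two_pi (A B C : ℝ) (hA0 : 0 < A) (hAp : A < π) (hB0 : 0 < B) (hBp : B < π)
    (hC0 : 0 < C) (hCp : C < π)
    (hG : 0 < 1 + 2*Real.cos A*Real.cos B*Real.cos C
        - Real.cos A^2 - Real.cos B^2 - Real.cos C^2) :
    A + B + C < 2*π := by
  by_contra h
  push_neg at h
  have hfac : 1 + 2*Real.cos A*Real.cos B*Real.cos C
      - Real.cos A^2 - Real.cos B^2 - Real.cos C^2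
      = (Real.cos A - Real.cos (B+C)) * (Real.cos (B-C) - Real.cos A) := by
    rw [Real.cos_add, Real.cos_sub]
    linear_combination (-(Real.sin C)^2) * (Real.sin_sq_add_cos_sq B)
      + ((Real.cos B)^2 - 1) * (Real.sin_sq_add_cos_sq C)
  have k1 : Real.cos A ≤ Real.cos (B+C) := by
    rw [← Real.cos_two_pi_sub (B+C)]
    exact Real.cos_le_cos_of_nonneg_of_le_pi (by linarith) hAp.le (by linarith)
  have k2 : Real.cos A ≤ Real.cos (B - C) := by
    rcases le_total C B with hcb | hbc
    · exact Real.cos_le_cos_of_nonneg_of_le_pi (by linarith) hAp.le (by linarith)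
    · have hcc := Real.cos_neg (B - C)
      rw [neg_sub] at hcc
      rw [← hcc]
      exact Real.cos_le_cos_of_nonneg_of_le_pi (by linarith) hAp.le (by linarith)
  nlinarith [hG, hfac, k1, k2]


set_option maxHeartbeats 2000000 in
/-- the Van Oosterom–Strackee formula computes the signed spherical
triangle area, which for a positively oriented non-degenerate spherical triangle
equals the spherical excess `α + β + γ - π`. -/
theorem stmt0 (v0 v1 v2 : E3)
    (h0 : ‖v0‖ = 1) (h1 : ‖v1‖ = 1) (h2 : ‖v2‖ = 1)
    (hpos : 0 < dot3 v0 (cross3 v1 v2))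
    (α β γ : ℝ)
    (hα : α = sphAngle v0 v1 v2) (hβ : β = sphAngle v1 v2 v0) (hγ : γ = sphAngle v2 v0 v1) :
    signedArea v0 v1 v2 =
      2 * atan2 (dot3 v0 (cross3 v1 v2)) (1 + dot3 v0 v1 + dot3 v0 v2 + dot3 v1 v2) ∧
    signedArea v0 v1 v2 = α + β + γ - π := by
  refine ⟨rfl, ?_⟩
  rw [show signedArea v0 v1 v2 = 2 * atan2 (dot3 v0 (cross3 v1 v2))
    (1 + dot3 v0 v1 + dot3 v0 v2 + dot3 v1 v2) from rfl]
  rw [myst_sphAngle_eq v0 v1 v2 h0 h1 h2] at hα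
  rw [myst_sphAngle_eq v1 v2 v0 h1 h2 h0, myst_dot3_comm v2 v0, myst_dot3_comm v1 v0] at hβ
  rw [myst_sphAngle_eq v2 v0 v1 h2 h0 h1, myst_dot3_comm v2 v0, myst_dot3_comm v2 v1] at hγ
  have hd2 := myst_gram v0 v1 v2 h0 h1 h2
  have hAab : |dot3 v0 v1| ≤ 1 := by
    have := abs_real_inner_le_norm v0 v1; rw [dot3]; rw [h0, h1, one_mul] at this; exact this
  have hBab : |dot3 v0 v2| ≤ 1 := by
    have := abs_real_inner_le_norm v0 v2; rw [dot3]; rw [h0, h2, one_mul] at this; exact this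
  have hCab : |dot3 v1 v2| ≤ 1 := by
    have := abs_real_inner_le_norm v1 v2; rw [dot3]; rw [h1, h2, one_mul] at this; exact this
  set a := dot3 v0 v1 with ha_def
  set b := dot3 v0 v2 with hb_def
  set c := dot3 v1 v2 with hc_def
  set d := dot3 v0 (cross3 v1 v2) with hd_def
  obtain ⟨ha1, ha2⟩ := abs_le.mp hAab
  obtain ⟨hb1, hb2⟩ := abs_le.mp hBab
  obtain ⟨hc1, hc2⟩ := abs_le.mp hCab
  have e1 : (1-a^2)*(1-b^2) = d^2 + (c - a*b)^2 := by linear_combination (-1) * hd2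
  have e2 : (1-c^2)*(1-a^2) = d^2 + (b - c*a)^2 := by linear_combination (-1) * hd2
  have e3 : (1-b^2)*(1-c^2) = d^2 + (a - b*c)^2 := by linear_combination (-1) * hd2
  have h1a2 : 0 ≤ 1 - a^2 := by
    have h := mul_nonneg (by linarith : (0:ℝ) ≤ 1 - a) (by linarith : (0:ℝ) ≤ 1 + a)
    linarith [h]
  have h1b2 : 0 ≤ 1 - b^2 := by
    have h := mul_nonneg (by linarith : (0:ℝ) ≤ 1 - b) (by linarith : (0:ℝ) ≤ 1 + b)
    linarith [h]
  have h1c2 : 0 ≤ 1 - c^2 := by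
    have h := mul_nonneg (by linarith : (0:ℝ) ≤ 1 - c) (by linarith : (0:ℝ) ≤ 1 + c)
    linarith [h]
  have hprod1 : 0 < (1-a^2)*(1-b^2) := by rw [e1]; positivity
  have hprod2 : 0 < (1-c^2)*(1-a^2) := by rw [e2]; positivity
  have h1a : 0 < 1 - a^2 := by
    rcases h1a2.lt_or_eq with h|h
    · exact h
    · exfalso; rw [← h, zero_mul] at hprod1; exact lt_irrefl 0 hprod1
  have h1b : 0 < 1 - b^2 := by
    rcases h1b2.lt_or_eq with h|h
    · exact h
    · exfalso; rw [← h, mul_zero] at hprod1; exact lt_irrefl 0 hprod1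
  have h1c : 0 < 1 - c^2 := by
    rcases h1c2.lt_or_eq with h|h
    · exact h
    · exfalso; rw [← h, zero_mul] at hprod2; exact lt_irrefl 0 hprod2
  set p := Real.sqrt (1 - a^2) with hp_def
  set q := Real.sqrt (1 - b^2) with hq_def
  set r := Real.sqrt (1 - c^2) with hr_def
  have hp : 0 < p := Real.sqrt_pos.2 h1a
  have hq : 0 < q := Real.sqrt_pos.2 h1b
  have hr : 0 < r := Real.sqrt_pos.2 h1c
  have hp2 : p^2 = 1 - a^2 := Real.sq_sqrt h1a.le
  have hq2 : q^2 = 1 - b^2 := Real.sq_sqrt h1b.le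
  have hr2 : r^2 = 1 - c^2 := Real.sq_sqrt h1c.le
  obtain ⟨hcα, hsα, hα0, hαπ⟩ := myst_angle_facts (c - a*b) (p*q) d (by positivity) hpos
    (by linear_combination (-1)*e1 + (-(1-b^2))*hp2 + (-(p^2))*hq2)
  rw [← hα] at hcα hsα hα0 hαπ
  obtain ⟨hcβ, hsβ, hβ0, hβπ⟩ := myst_angle_facts (b - c*a) (r*p) d (by positivity) hpos
    (by linear_combination (-1)*e2 + (-(1-a^2))*hr2 + (-(r^2))*hp2)
  rw [← hβ] at hcβ hsβ hβ0 hβπ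
  obtain ⟨hcγ, hsγ, hγ0, hγπ⟩ := myst_angle_facts (a - b*c) (q*r) d (by positivity) hpos
    (by linear_combination (-1)*e3 + (-(1-c^2))*hq2 + (-(q^2))*hr2)
  rw [← hγ] at hcγ hsγ hγ0 hγπ
  -- excess is positive
  have hgt : π < α + β + γ := by
    have key : (1 - 2*((c-a*b)/(p*q))*((b-c*a)/(r*p))*((a-b*c)/(q*r))
        - ((c-a*b)/(p*q))^2 - ((b-c*a)/(r*p))^2 - ((a-b*c)/(q*r))^2) * (p^2*q^2*r^2)
        = (d^2)^2 := by
      have expand : (1 - 2*((c-a*b)/(p*q))*((b-c*a)/(r*p))*((a-b*c)/(q*r))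
          - ((c-a*b)/(p*q))^2 - ((b-c*a)/(r*p))^2 - ((a-b*c)/(q*r))^2) * (p^2*q^2*r^2)
          = p^2*q^2*r^2 - 2*(c-a*b)*(b-c*a)*(a-b*c)
            - (c-a*b)^2*r^2 - (b-c*a)^2*q^2 - (a-b*c)^2*p^2 := by
        field_simp
      rw [expand, hp2, hq2, hr2, hd2]; ring
    have hPne : (p^2*q^2*r^2) ≠ 0 := by positivity
    have hGpos : 0 < 1 - 2*((c-a*b)/(p*q))*((b-c*a)/(r*p))*((a-b*c)/(q*r))
        - ((c-a*b)/(p*q))^2 - ((b-c*a)/(r*p))^2 - ((a-b*c)/(q*r))^2 := by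
      rw [(eq_div_iff hPne).mpr key]
      positivity
    have hsum := myst_sum_lt_two_pi (π - α) (π - β) (π - γ)
      (by linarith) (by linarith) (by linarith) (by linarith) (by linarith) (by linarith)
      (by
        simp only [Real.cos_pi_sub]
        rw [hcα, hcβ, hcγ]
        exact lt_of_lt_of_eq hGpos (by ring))
    linarith
  -- cos and sin of the sum
  have hcosSum : Real.cos (α+β+γ) * (p^2*q^2*r^2)
      = (c-a*b)*(b-c*a)*(a-b*c) - d^2*((c-a*b)+(b-c*a)+(a-b*c)) := by
    rw [Real.cos_add, Real.cos_add, Real.sin_add, hcα, hsα, hcβ, hsβ, hcγ, hsγ]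
    field_simp
    ring
  have hsinSum : Real.sin (α+β+γ) * (p^2*q^2*r^2)
      = d*((b-c*a)*(a-b*c) + (c-a*b)*(a-b*c) + (c-a*b)*(b-c*a)) - d^3 := by
    rw [Real.sin_add, Real.sin_add, Real.cos_add, hcα, hsα, hcβ, hsβ, hcγ, hsγ]
    field_simp
    ring
  have h1apos : 0 < 1 + a := by
    rcases eq_or_lt_of_le ha1 with h|h
    · exfalso; rw [← h] at h1a; norm_num at h1a
    · linarith
  have h1bpos : 0 < 1 + b := by
    rcases eq_or_lt_of_le hb1 with h|h
    · exfalso; rw [← h] at h1b; norm_num at h1b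
    · linarith
  have h1cpos : 0 < 1 + c := by
    rcases eq_or_lt_of_le hc1 with h|h
    · exfalso; rw [← h] at h1c; norm_num at h1c
    · linarith
  set N := Real.sqrt (2*(1+a)*(1+b)*(1+c)) with hN_def
  have hN2 : N^2 = 2*(1+a)*(1+b)*(1+c) := Real.sq_sqrt (by positivity)
  have hNpos : 0 < N := Real.sqrt_pos.2 (by positivity)
  have hPne : (p^2*q^2*r^2) ≠ 0 := by positivity
  have hcosE : Real.cos (α+β+γ-π) = 1 - 2*d^2/N^2 := by
    have hh2 : Real.cos (α+β+γ-π) * (p^2*q^2*r^2)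
        = -((c-a*b)*(b-c*a)*(a-b*c) - d^2*((c-a*b)+(b-c*a)+(a-b*c))) := by
      rw [Real.cos_sub_pi]; linear_combination (-1) * hcosSum
    have hh : (1 - 2*d^2/N^2) * (p^2*q^2*r^2)
        = -((c-a*b)*(b-c*a)*(a-b*c) - d^2*((c-a*b)+(b-c*a)+(a-b*c))) := by
      rw [hN2, hp2, hq2, hr2, hd2]
      field_simp
      ring
    exact mul_right_cancel₀ hPne (hh2.trans hh.symm)
  have hsinE : Real.sin (α+β+γ-π) = 2*d*(1+a+b+c)/N^2 := by
    have hh2 : Real.sin (α+β+γ-π) * (p^2*q^2*r^2)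
        = -(d*((b-c*a)*(a-b*c) + (c-a*b)*(a-b*c) + (c-a*b)*(b-c*a)) - d^3) := by
      rw [Real.sin_sub_pi]; linear_combination (-1) * hsinSum
    have hh : (2*d*(1+a+b+c)/N^2) * (p^2*q^2*r^2)
        = -(d*((b-c*a)*(a-b*c) + (c-a*b)*(a-b*c) + (c-a*b)*(b-c*a)) - d^3) := by
      have hd3 : d^3 = (1 + 2*a*b*c - a^2 - b^2 - c^2)*d := by
        rw [pow_succ, hd2]
      rw [hd3, hN2, hp2, hq2, hr2]
      field_simp
      ring
    exact mul_right_cancel₀ hPne (hh2.trans hh.symm)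
  -- half angle
  have hE2 : α+β+γ-π = 2*((α+β+γ-π)/2) := by ring
  set θ := (α+β+γ-π)/2 with hθ_def
  have hθ0 : 0 < θ := by rw [hθ_def]; linarith
  have hθπ : θ < π := by rw [hθ_def]; linarith
  have hsinθpos : 0 < Real.sin θ := Real.sin_pos_of_pos_of_lt_pi hθ0 hθπ
  have hsθ : Real.sin θ = d/N := by
    have e := hcosE
    rw [hE2, Real.cos_two_mul] at e
    have hpy := Real.sin_sq_add_cos_sq θ
    have h1' : Real.sin θ^2 = (d/N)^2 := by
      rw [div_pow]
      have e' : 2*(d^2/N^2) = 2*d^2/N^2 := by ring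
      linarith [e, e', hpy]
    rw [← Real.sqrt_sq hsinθpos.le, h1', Real.sqrt_sq (by positivity)]
  have hcθ : Real.cos θ = (1+a+b+c)/N := by
    have e := hsinE
    rw [hE2, Real.sin_two_mul, hsθ] at e
    have hdN : (2*(d/N)) ≠ 0 := by positivity
    have hrw : 2*d*(1+a+b+c)/N^2 = (2*(d/N)) * ((1+a+b+c)/N) := by
      ring
    rw [hrw] at e
    have e' : (2*(d/N)) * Real.cos θ = (2*(d/N)) * ((1+a+b+c)/N) := by
      linear_combination e
    exact mul_left_cancel₀ hdN e'
  -- conclude via arg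
  have harg : atan2 d (1+a+b+c) = θ := by
    have hmk : (⟨1+a+b+c, d⟩ : ℂ)
        = (N:ℂ) * (Complex.cos θ + Complex.sin θ * Complex.I) := by
      rw [← Complex.ofReal_cos, ← Complex.ofReal_sin, hcθ, hsθ]
      apply Complex.ext <;> simp <;> field_simp
    rw [atan2, hmk]
    exact Complex.arg_mul_cos_add_sin_mul_I hNpos ⟨by linarith [Real.pi_pos], hθπ.le⟩
  rw [harg]
  rw [hθ_def]
  ring
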